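/- arXiv:1309.3294 — 3 statements merged into one kernel-verified Lean document; each statement's English description precedes it below -/
import Mathlib

section
/- Suppose I ⊆ ℝ is a bounded interval and g : ℝ → ℝ is Lipschitz on I. Then for almost every r ∈ ℝ (with respect to Lebesgue measure), the level set g⁻¹(r) ∩ I = {t ∈ I | g(t) = r} is finite. -/
/-!
Extend `g` to a Lipschitz function `f` on `ℝ`. If the level set of `r` inside the bounded set `I`
is infinite, it accumulates at some `x` with `f x = r`. Either `f` is not differentiable at `x`,
and these points form a null set (Rademacher) whose image is null because Lipschitz maps do not
increase one-dimensional Hausdorff measure; or `f` is differentiable at `x`, and then `f' x = 0`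
since `f` is constant on a set accumulating at `x`, and the image of the critical points is null
by the one-dimensional Sard lemma.
-/

open Set MeasureTheory Filter
open scoped NNReal

theorem LipschitzOnWith.volume_image_null {K : ℝ≥0} {f : ℝ → ℝ} {s : Set ℝ}
    (hf : LipschitzOnWith K f s) (hs : volume s = 0) : volume (f '' s) = 0 := by
  rw [← hausdorffMeasure_real] at hs ⊢
  exact nonpos_iff_eq_zero.1 <|
    (hf.hausdorffMeasure_image_le zero_le_one).trans_eq (by rw [hs, mul_zero])

theorem volume_image_null_of_hasDerivWithinAt_zero {f : ℝ → ℝ} {s : Set ℝ}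
    (hf : ∀ x ∈ s, HasDerivWithinAt f 0 s x) : volume (f '' s) = 0 :=
  addHaar_image_eq_zero_of_det_fderivWithin_eq_zero volume (f' := fun _ ↦ 0)
    (fun x hx ↦ by
      simpa [ContinuousLinearMap.toSpanSingleton_zero] using (hf x hx).hasFDerivWithinAt)
    (fun _ _ ↦ by simp [ContinuousLinearMap.det])

theorem HasDerivAt.eq_zero_of_accPt_fiber {𝕜 F : Type*} [NontriviallyNormedField 𝕜]
    [NormedAddCommGroup F] [NormedSpace 𝕜 F] {f : 𝕜 → F} {f' : F} {x : 𝕜}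
    (hf : HasDerivAt f f' x) (hx : AccPt x (𝓟 (f ⁻¹' {f x}))) : f' = 0 :=
  hx.uniqueDiffWithinAt.eq_deriv _ hf.hasDerivWithinAt <|
    (hasDerivWithinAt_const x _ (f x)).congr (fun _ hy ↦ hy) rfl

theorem exists_accPt_fiber_of_infinite {X Y : Type*} [PseudoMetricSpace X] [ProperSpace X]
    [TopologicalSpace Y] [T1Space Y] {f : X → Y} {s : Set X} {r : Y} (hf : Continuous f)
    (hs : Bornology.IsBounded s) (hr : (s ∩ f ⁻¹' {r}).Infinite) :
    ∃ x, f x = r ∧ AccPt x (𝓟 (f ⁻¹' {r})) := by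
  obtain ⟨x, -, hx⟩ := hr.exists_accPt_of_subset_isCompact hs.isCompact_closure
    (inter_subset_left.trans subset_closure)
  have hx' : AccPt x (𝓟 (f ⁻¹' {r})) := hx.mono (principal_mono.2 inter_subset_right)
  have hmem : x ∈ closure (f ⁻¹' {r}) := mem_closure_iff_clusterPt.2 hx'.clusterPt
  exact ⟨x, by simpa [(isClosed_singleton.preimage hf).closure_eq] using hmem, hx'⟩

theorem LipschitzWith.ae_finite_inter_preimage_singleton {K : ℝ≥0} {f : ℝ → ℝ} {s : Set ℝ}
    (hf : LipschitzWith K f) (hs : Bornology.IsBounded s) :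
    ∀ᵐ r, (s ∩ f ⁻¹' {r}).Finite := by
  have hbad : {r | ¬(s ∩ f ⁻¹' {r}).Finite} ⊆
      f '' {x | HasDerivAt f 0 x} ∪ f '' {x | ¬DifferentiableAt ℝ f x} := by
    intro r hr
    obtain ⟨x, rfl, hx⟩ := exists_accPt_fiber_of_infinite hf.continuous hs hr
    by_cases hdiff : DifferentiableAt ℝ f x
    · have hderiv := hdiff.hasDerivAt
      exact Or.inl ⟨x, (hderiv.eq_zero_of_accPt_fiber hx) ▸ hderiv, rfl⟩
    · exact Or.inr ⟨x, hdiff, rfl⟩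
  have hcrit : volume (f '' {x | HasDerivAt f 0 x}) = 0 :=
    volume_image_null_of_hasDerivWithinAt_zero fun _ hx ↦ HasDerivAt.hasDerivWithinAt hx
  have hnondiff : volume (f '' {x | ¬DifferentiableAt ℝ f x}) = 0 :=
    hf.lipschitzOnWith.volume_image_null (ae_iff.1 hf.ae_differentiableAt)
  exact ae_iff.2 <| measure_mono_null hbad (measure_union_null hcrit hnondiff)

theorem lipschitz_ae_level_set_finite_general
    (I : Set ℝ) (hI : Bornology.IsBounded I)
    (g : ℝ → ℝ) (K : NNReal) (hg : LipschitzOnWith K g I) :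
    ∀ᵐ r : ℝ, {t ∈ I | g t = r}.Finite := by
  obtain ⟨f, hf, hfg⟩ := hg.extend_real
  filter_upwards [hf.ae_finite_inter_preimage_singleton hI] with r hr
  exact hr.subset fun t ⟨htI, ht⟩ ↦ ⟨htI, by simp [← hfg htI, ht]⟩

/-- For a Lipschitz function on a bounded interval, almost every level set is finite. -/
theorem lipschitz_ae_level_set_finite
    (I : Set ℝ) (hI : Bornology.IsBounded I) (hI' : I.OrdConnected)
    (g : ℝ → ℝ) (K : NNReal) (hg : LipschitzOnWith K g I) :
    ∀ᵐ r : ℝ, {t ∈ I | g t = r}.Finite :=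
  lipschitz_ae_level_set_finite_general I hI g K hg
end

section
/- Let f : ℝ² → ℝ² be locally Lipschitz, let Ω ⊆ ℝ² be a minimal set of the ODE x' = f(x), and let x : ℝ → ℝ² be a solution whose image is contained in Ω. Then for every y₀ ∈ Ω, every δ > 0, and every s ∈ ℝ, there exists t > s such that ‖x(t) − y₀‖ < δ. -/
open Set Metric MeasureTheory

abbrev Plane := EuclideanSpace ℝ (Fin 2)

/-- A solution of the ODE x' = f(x): a differentiable curve satisfying deriv x t = f (x t). -/
def IsSolution (f : Plane → Plane) (x : ℝ → Plane) : Prop :=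
  Differentiable ℝ x ∧ ∀ t : ℝ, deriv x t = f (x t)

/-- Ω is invariant: every point of Ω starts some solution staying in Ω, and every
solution starting in Ω remains in Ω. -/
def IsInvariantSet (f : Plane → Plane) (Ω : Set Plane) : Prop :=
  (∀ y ∈ Ω, ∃ x : ℝ → Plane, IsSolution f x ∧ x 0 = y ∧ Set.range x ⊆ Ω) ∧
  (∀ x : ℝ → Plane, IsSolution f x → x 0 ∈ Ω → Set.range x ⊆ Ω)

/-- Ω is a minimal set: nonempty, compact, invariant, with no proper nonempty compact
invariant subset. -/
def IsMinimalSet (f : Plane → Plane) (Ω : Set Plane) : Prop :=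
  Ω.Nonempty ∧ IsCompact Ω ∧ IsInvariantSet f Ω ∧
  ∀ Ω' : Set Plane, Ω'.Nonempty → IsCompact Ω' → IsInvariantSet f Ω' → Ω' ⊆ Ω → Ω' = Ω

/-!
The ω-limit set of `x` is a nonempty compact subset of `Ω`. Since `f` is Lipschitz on the
compact set `Ω`, Gronwall's inequality gives continuous dependence on initial data, both forward
and backward in time, so a solution through a point of the ω-limit set stays in it: the ω-limit
set is invariant. Minimality forces it to be all of `Ω`, i.e. every point of `Ω` is a cluster
point of `x t` as `t → ∞`.
-/

open Filter Topology
open scoped NNReal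

section OmegaLimit

variable {α : Type*} [TopologicalSpace α]

def omegaLimitSet (x : ℝ → α) : Set α :=
  {y | MapClusterPt y atTop x}

variable {x : ℝ → α} {Ω : Set α}

lemma isClosed_omegaLimitSet : IsClosed (omegaLimitSet x) :=
  isClosed_setOfPred_clusterPt

lemma omegaLimitSet_subset (hΩ : IsClosed Ω) (hxΩ : range x ⊆ Ω) : omegaLimitSet x ⊆ Ω :=
  fun _ hy ↦ hΩ.mem_of_mapClusterPt hy (.of_forall fun t ↦ hxΩ (mem_range_self t))

lemma omegaLimitSet_nonempty (hΩ : IsCompact Ω) (hxΩ : range x ⊆ Ω) :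
    (omegaLimitSet x).Nonempty :=
  let ⟨y, _, hy⟩ := hΩ.exists_mapClusterPt_of_frequently
    (.of_forall (f := atTop) fun t ↦ hxΩ (mem_range_self t))
  ⟨y, hy⟩

end OmegaLimit

lemma mem_omegaLimitSet_of_dist_le {α : Type*} [PseudoMetricSpace α] {x : ℝ → α} {y y' : α}
    (hy : y ∈ omegaLimitSet x) (t : ℝ) {C : ℝ} (hC : 0 < C)
    (h : ∀ q, dist y' (x (q + t)) ≤ C * dist y (x q)) : y' ∈ omegaLimitSet x := by
  rw [omegaLimitSet, mem_ofPred, Metric.nhds_basis_ball.mapClusterPt_iff_frequently] at hy ⊢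
  intro ε hε
  refine (tendsto_atTop_add_const_right _ t tendsto_id).frequently
    ((hy (ε / C) (by positivity)).mono fun q hq ↦ ?_)
  rw [Metric.mem_ball, dist_comm] at hq ⊢
  calc dist y' (x (q + t)) ≤ C * dist y (x q) := h q
    _ < C * (ε / C) := by gcongr
    _ = ε := by field_simp

namespace IsSolution

variable {f : Plane → Plane} {x u v : ℝ → Plane}

lemma hasDerivAt (hx : IsSolution f x) (t : ℝ) : HasDerivAt x (f (x t)) t :=
  hx.2 t ▸ (hx.1 t).hasDerivAt

lemma comp_const_add (hx : IsSolution f x) (q : ℝ) : IsSolution f (fun t ↦ x (q + t)) :=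
  ⟨hx.1.comp (differentiable_id.const_add q), fun t ↦ by rw [deriv_comp_const_add, hx.2]⟩

lemma comp_neg (hx : IsSolution f x) : IsSolution (-f) (fun t ↦ x (-t)) :=
  ⟨hx.1.comp differentiable_neg, fun t ↦ by rw [deriv_comp_neg, hx.2, Pi.neg_apply]⟩

variable {Ω : Set Plane} {K : ℝ≥0}

lemma dist_le_mul_exp (hK : LipschitzOnWith K f Ω) (hu : IsSolution f u) (hv : IsSolution f v)
    (huΩ : range u ⊆ Ω) (hvΩ : range v ⊆ Ω) {t : ℝ} (ht : 0 ≤ t) :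
    dist (u t) (v t) ≤ dist (u 0) (v 0) * Real.exp (K * t) := by
  simpa using dist_le_of_trajectories_ODE_of_mem (v := fun _ ↦ f) (s := fun _ ↦ Ω)
    (fun _ _ ↦ hK) hu.1.continuous.continuousOn
    (fun t _ ↦ (hu.hasDerivAt t).hasDerivWithinAt) (fun t _ ↦ huΩ (mem_range_self t))
    hv.1.continuous.continuousOn
    (fun t _ ↦ (hv.hasDerivAt t).hasDerivWithinAt) (fun t _ ↦ hvΩ (mem_range_self t))
    le_rfl t ⟨ht, le_rfl⟩

lemma dist_le_mul_exp_abs (hK : LipschitzOnWith K f Ω) (hu : IsSolution f u)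
    (hv : IsSolution f v) (huΩ : range u ⊆ Ω) (hvΩ : range v ⊆ Ω) (t : ℝ) :
    dist (u t) (v t) ≤ dist (u 0) (v 0) * Real.exp (K * |t|) := by
  rcases le_or_gt 0 t with ht | ht
  · simpa [abs_of_nonneg ht] using hu.dist_le_mul_exp hK hv huΩ hvΩ ht
  · have hK' : LipschitzOnWith K (-f) Ω := fun a ha b hb ↦ by
      simpa [edist_neg_neg] using hK ha hb
    have := hu.comp_neg.dist_le_mul_exp hK' hv.comp_neg
      ((range_comp_subset_range _ u).trans huΩ) ((range_comp_subset_range _ v).trans hvΩ)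
      (neg_nonneg.2 ht.le)
    simpa [abs_of_neg ht] using this

lemma range_subset_omegaLimitSet (hK : LipschitzOnWith K f Ω) (hx : IsSolution f x)
    (hxΩ : range x ⊆ Ω) (hu : IsSolution f u) (huΩ : range u ⊆ Ω)
    (hu0 : u 0 ∈ omegaLimitSet x) : range u ⊆ omegaLimitSet x := by
  rintro _ ⟨t, rfl⟩
  refine mem_omegaLimitSet_of_dist_le hu0 t (Real.exp_pos (K * |t|)) fun q ↦ ?_
  have := hu.dist_le_mul_exp_abs hK (hx.comp_const_add q) huΩ
    ((range_comp_subset_range _ x).trans hxΩ) t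
  simpa [mul_comm] using this

end IsSolution

lemma IsInvariantSet.omegaLimitSet {f : Plane → Plane} {Ω : Set Plane} {K : ℝ≥0}
    (hΩ : IsInvariantSet f Ω) (hΩc : IsClosed Ω) (hK : LipschitzOnWith K f Ω)
    {x : ℝ → Plane} (hx : IsSolution f x) (hxΩ : range x ⊆ Ω) :
    IsInvariantSet f (omegaLimitSet x) := by
  have hsub := omegaLimitSet_subset hΩc hxΩ
  refine ⟨fun y hy ↦ ?_, fun u hu hu0 ↦ ?_⟩
  · obtain ⟨u, hu, rfl, huΩ⟩ := hΩ.1 y (hsub hy)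
    exact ⟨u, hu, rfl, hx.range_subset_omegaLimitSet hK hxΩ hu huΩ hy⟩
  · exact hx.range_subset_omegaLimitSet hK hxΩ hu (hΩ.2 u hu (hsub hu0)) hu0

lemma IsMinimalSet.omegaLimitSet_eq {f : Plane → Plane} (hf : LocallyLipschitz f)
    {Ω : Set Plane} (hΩ : IsMinimalSet f Ω) {x : ℝ → Plane} (hx : IsSolution f x)
    (hxΩ : range x ⊆ Ω) : omegaLimitSet x = Ω := by
  obtain ⟨-, hc, hinv, hmin⟩ := hΩ
  obtain ⟨K, hK⟩ := hf.locallyLipschitzOn.exists_lipschitzOnWith_of_compact hc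
  have hsub := omegaLimitSet_subset hc.isClosed hxΩ
  exact hmin _ (omegaLimitSet_nonempty hc hxΩ) (hc.of_isClosed_subset isClosed_omegaLimitSet hsub)
    (hinv.omegaLimitSet hc.isClosed hK hx hxΩ) hsub

/-- Recurrence: a solution lying in a minimal set returns arbitrarily close to every
point of the set at arbitrarily large times. -/
theorem minimal_set_recurrence (f : Plane → Plane) (hf : LocallyLipschitz f)
    (Ω : Set Plane) (hΩ : IsMinimalSet f Ω)
    (x : ℝ → Plane) (hx : IsSolution f x) (hxΩ : Set.range x ⊆ Ω) :
    ∀ y₀ ∈ Ω, ∀ δ > (0 : ℝ), ∀ s : ℝ, ∃ t > s, ‖x t - y₀‖ < δ := by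
  intro y₀ hy₀ δ hδ s
  rw [← hΩ.omegaLimitSet_eq hf hx hxΩ] at hy₀
  obtain ⟨t, hts, ht⟩ := frequently_atTop'.1 (hy₀.frequently (Metric.ball_mem_nhds y₀ hδ)) s
  exact ⟨t, hts, by rwa [← dist_eq_norm]⟩
end

section
/- Let K ⊆ ℝ² be a compact set, let g : ℝ → ℝ² be a measurable function, and let S ⊆ [0, ∞) be a measurable set of infinite Lebesgue measure such that g(t) ∈ K for all t ∈ S. Suppose there is a constant C ≥ 0 such that for every T > 0, ‖∫_{S ∩ [0, T]} g(t) dt‖ ≤ C. Then 0 belongs to the closed convex hull of K. -/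
/-! The averages `⨍ t in S ∩ [0, T], g t` lie in the closed convex hull of `K`, and their norms
are at most `C / |S ∩ [0, T]|`, which tends to `0` as `T → ∞`; so `0` is a limit of points of
that closed set. -/

open Set Filter Topology MeasureTheory ENNReal

theorem tendsto_measure_inter_Icc_atTop {μ : Measure ℝ} {S : Set ℝ} (hS0 : S ⊆ Ici 0) :
    Tendsto (fun T => μ (S ∩ Icc 0 T)) atTop (𝓝 (μ S)) := by
  have hunion : ⋃ T : ℝ, S ∩ Icc 0 T = S := by
    refine (iUnion_subset fun T => inter_subset_left).antisymm fun t ht => ?_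
    exact mem_iUnion.2 ⟨t, ht, hS0 ht, le_rfl⟩
  have hmono : Monotone fun T : ℝ => S ∩ Icc 0 T :=
    fun _ _ hab => inter_subset_inter_right _ (Icc_subset_Icc_right hab)
  simpa only [hunion, Function.comp_def] using tendsto_measure_iUnion_atTop (μ := μ) hmono

theorem tendsto_setAverage_zero_of_norm_setIntegral_le {α ι E : Type*} [MeasurableSpace α]
    [NormedAddCommGroup E] [NormedSpace ℝ E] {μ : Measure α} {l : Filter ι} {A : ι → Set α}
    {f : α → E} {C : ℝ} (hA : Tendsto (fun i => μ (A i)) l (𝓝 ∞))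
    (hf : ∀ᶠ i in l, ‖∫ x in A i, f x ∂μ‖ ≤ C) :
    Tendsto (fun i => ⨍ x in A i, f x ∂μ) l (𝓝 0) := by
  have hinv : Tendsto (fun i => (μ.real (A i))⁻¹) l (𝓝 0) := by
    have := (ENNReal.tendsto_toReal zero_ne_top).comp (inv_top ▸ tendsto_inv_iff.2 hA)
    simpa only [measureReal_def, Function.comp_def, toReal_inv, toReal_zero] using this
  rw [tendsto_zero_iff_norm_tendsto_zero]
  refine squeeze_zero' (.of_forall fun _ => norm_nonneg _) (hf.mono fun i hi => ?_)
    (by simpa only [zero_mul] using hinv.mul_const C)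
  rw [setAverage_eq, norm_smul, Real.norm_of_nonneg (inv_nonneg.2 measureReal_nonneg)]
  exact mul_le_mul_of_nonneg_left hi (inv_nonneg.2 measureReal_nonneg)

theorem zero_mem_closed_convexHull_of_bounded_integral_general
    (K : Set (EuclideanSpace ℝ (Fin 2))) (hK : IsCompact K)
    (g : ℝ → EuclideanSpace ℝ (Fin 2)) (hg : Measurable g)
    (S : Set ℝ) (hS : MeasurableSet S) (hS0 : S ⊆ Set.Ici (0 : ℝ))
    (hSvol : volume S = ⊤) (hgK : ∀ t ∈ S, g t ∈ K)
    (C : ℝ)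
    (hbound : ∀ T > (0 : ℝ), ‖∫ t in S ∩ Set.Icc 0 T, g t‖ ≤ C) :
    (0 : EuclideanSpace ℝ (Fin 2)) ∈ closure (convexHull ℝ K) := by
  have hvol : Tendsto (fun T => volume (S ∩ Icc 0 T)) atTop (𝓝 ∞) :=
    hSvol ▸ tendsto_measure_inter_Icc_atTop hS0
  obtain ⟨M, hM⟩ := hK.isBounded.exists_norm_le
  refine isClosed_closure.mem_of_tendsto (tendsto_setAverage_zero_of_norm_setIntegral_le hvol
    ((eventually_gt_atTop 0).mono hbound)) ?_
  filter_upwards [hvol.eventually_ne top_ne_zero] with T hT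
  have hfin : volume (S ∩ Icc 0 T) ≠ ∞ :=
    ((measure_mono inter_subset_right).trans_lt measure_Icc_lt_top).ne
  have hgK_ae : ∀ᵐ t ∂volume.restrict (S ∩ Icc 0 T), g t ∈ K :=
    (ae_restrict_mem (hS.inter measurableSet_Icc)).mono fun t ht => hgK t ht.1
  exact (convex_convexHull ℝ K).set_average_mem_closure hT hfin
    (hgK_ae.mono fun _ ht => subset_convexHull ℝ K ht)
    (Measure.integrableOn_of_bounded hfin hg.aestronglyMeasurable (hgK_ae.mono fun t ht => hM _ ht))

/-- Averaging principle: if g takes values in a compact set K on a set S of infinite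
measure, and the integrals of g over S ∩ [0, T] stay bounded, then 0 lies in the
closed convex hull of K. -/
theorem zero_mem_closed_convexHull_of_bounded_integral
    (K : Set (EuclideanSpace ℝ (Fin 2))) (hK : IsCompact K)
    (g : ℝ → EuclideanSpace ℝ (Fin 2)) (hg : Measurable g)
    (S : Set ℝ) (hS : MeasurableSet S) (hS0 : S ⊆ Set.Ici (0 : ℝ))
    (hSvol : volume S = ⊤) (hgK : ∀ t ∈ S, g t ∈ K)
    (C : ℝ) (hC : 0 ≤ C)
    (hbound : ∀ T > (0 : ℝ), ‖∫ t in S ∩ Set.Icc 0 T, g t‖ ≤ C) :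
    (0 : EuclideanSpace ℝ (Fin 2)) ∈ closure (convexHull ℝ K) :=
  zero_mem_closed_convexHull_of_bounded_integral_general K hK g hg S hS hS0 hSvol hgK C hbound
end
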